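/- Let x > 0 and a, b, c ∈ ℂ with positive real parts (non-real values among a,b,c occurring in conjugate pairs). Then there exist constants K > 0 and σ > 0, independent of n, such that |S_n(x²; a,b,c)| ≤ K (n!)² (1+n)^σ for all n ∈ ℕ₀. -/

import Mathlib

open Complex Finset

/-- The Pochhammer symbol (rising factorial) `(z)_n = z(z+1)⋯(z+n-1)`. -/
noncomputable def poch (z : ℂ) (n : ℕ) : ℂ := ∏ i ∈ Finset.range n, (z + i)

/-- The continuous dual Hahn polynomial `S_n(x²; a, b, c)`, via its terminating
`₃F₂(-n, a+ix, a-ix; a+b, a+c; 1)` representation. -/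
noncomputable def cdHahn (n : ℕ) (x : ℝ) (a b c : ℂ) : ℂ :=
  poch (a + b) n * poch (a + c) n *
    ∑ j ∈ Finset.range (n + 1),
      poch (-(n : ℂ)) j * poch (a + Complex.I * x) j * poch (a - Complex.I * x) j /
        (poch (a + b) j * poch (a + c) j * j.factorial)

/-!
Bounding the terminating ₃F₂ termwise loses a factor `2ⁿ`: its `j`-th term has size about
`C(n,j) (n!)²`. Chu–Vandermonde, applied to `(b+ix)_k / (a+b)_k`, followed by Vandermonde's
convolution rewrites it as
`S_n = (a+b)_n n! ∑_{k+l=n} (a+ix)_k (b+ix)_k / ((a+b)_k k!) · (c-ix)_l / l!`,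
whose terms are polynomially bounded. Indeed `|(w)_m| ≤ m! (1+m)^N` as soon as `|w| ≤ N+1`, and,
since `Re(a+b) > 0`, `|a+ix+i| |b+ix+i| ≤ |a+b+i| (N+1+i)` for a suitable `N`, so that
`|(a+ix)_k (b+ix)_k| ≤ |(a+b)_k| k! (1+k)^N`. Summing `n+1` such terms gives the bound.
-/

open Nat Polynomial

lemma poch_eq_eval_ascPochhammer (z : ℂ) (n : ℕ) : poch z n = (ascPochhammer ℂ n).eval z := by
  induction n with
  | zero => simp [poch]
  | succ n ih => rw [poch, prod_range_succ, ← poch, ih, ascPochhammer_succ_eval]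

lemma poch_eq_smeval_descPochhammer (z : ℂ) (n : ℕ) :
    poch z n = (descPochhammer ℤ n).smeval (z + n - 1) := by
  rw [descPochhammer_smeval_eq_ascPochhammer, ascPochhammer_smeval_eq_eval,
    poch_eq_eval_ascPochhammer]
  ring_nf

lemma smeval_descPochhammer_neg (z : ℂ) (n : ℕ) :
    (descPochhammer ℤ n).smeval (-z) = (-1) ^ n * poch z n := by
  induction n with
  | zero => simp [poch]
  | succ n ih =>
    rw [descPochhammer_succ_right, smeval_mul, ih, smeval_sub, smeval_X, smeval_natCast, poch,
      poch, prod_range_succ]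
    simp only [pow_one, pow_zero, nsmul_eq_mul, mul_one]
    ring

lemma poch_neg_natCast (n j : ℕ) : poch (-n) j = (-1) ^ j * n.descFactorial j := by
  have h := smeval_descPochhammer_neg (-n) j
  rw [neg_neg, descPochhammer_smeval_eq_descFactorial] at h
  rw [h, ← mul_assoc, ← pow_add, ← two_mul, pow_mul]
  simp

lemma poch_add (z : ℂ) (m n : ℕ) : poch z (m + n) = poch z m * poch (z + m) n := by
  rw [poch, prod_range_add, ← poch]
  simp only [poch, Nat.cast_add, add_assoc]

lemma poch_ne_zero {z : ℂ} (hz : 0 < z.re) (n : ℕ) : poch z n ≠ 0 :=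
  prod_ne_zero_iff.2 fun i _ h => by
    have := congrArg re h
    simp only [add_re, natCast_re, zero_re] at this
    linarith [i.cast_nonneg (α := ℝ)]

theorem poch_add_eq_sum_antidiagonal (u v : ℂ) (n : ℕ) :
    poch (u + v) n = ∑ p ∈ antidiagonal n, n.choose p.1 * (poch u p.1 * poch v p.2) := by
  have h := Ring.descPochhammer_smeval_add (r := -u) (s := -v) n (Commute.all _ _)
  rw [← neg_add, smeval_descPochhammer_neg] at h
  apply mul_left_cancel₀ (pow_ne_zero n (neg_ne_zero.2 one_ne_zero) : (-1 : ℂ) ^ n ≠ 0)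
  rw [h, mul_sum]
  refine sum_congr rfl fun p hp => ?_
  rw [HasAntidiagonal.mem_antidiagonal] at hp
  rw [smeval_descPochhammer_neg, smeval_descPochhammer_neg, ← hp, pow_add]
  ring

theorem poch_sub_eq_sum_antidiagonal (B C : ℂ) (n : ℕ) :
    poch (C - B) n =
      ∑ p ∈ antidiagonal n, n.choose p.1 * ((-1) ^ p.1 * poch B p.1 * poch (C + p.1) p.2) := by
  -- Chu–Vandermonde is Vandermonde for falling factorials, split at `-B + (C + n - 1)`.
  rw [poch_eq_smeval_descPochhammer, show C - B + n - 1 = -B + (C + n - 1) by ring,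
    Ring.descPochhammer_smeval_add _ (Commute.all _ _)]
  refine sum_congr rfl fun p hp => ?_
  rw [HasAntidiagonal.mem_antidiagonal] at hp
  rw [smeval_descPochhammer_neg, poch_eq_smeval_descPochhammer (C + p.1), ← hp]
  push_cast
  ring_nf

theorem poch_add_div_factorial (u v : ℂ) (n : ℕ) :
    poch (u + v) n / n ! = ∑ p ∈ antidiagonal n, poch u p.1 / p.1 ! * (poch v p.2 / p.2 !) := by
  rw [poch_add_eq_sum_antidiagonal, sum_div]
  refine sum_congr rfl fun ⟨i, j⟩ hp => ?_
  rw [HasAntidiagonal.mem_antidiagonal] at hp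
  subst hp
  rw [Nat.cast_add_choose]
  have : ((i + j)! : ℂ) ≠ 0 := mod_cast (i + j).factorial_ne_zero
  field_simp

theorem poch_sub_div_poch (B C : ℂ) (hC : ∀ j, poch C j ≠ 0) (n : ℕ) :
    poch (C - B) n / poch C n =
      ∑ p ∈ antidiagonal n, n.choose p.1 * ((-1) ^ p.1 * poch B p.1 / poch C p.1) := by
  rw [poch_sub_eq_sum_antidiagonal, sum_div]
  refine sum_congr rfl fun ⟨i, j⟩ hp => ?_
  rw [HasAntidiagonal.mem_antidiagonal] at hp
  subst hp
  have h := hC (i + j)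
  rw [poch_add C i j] at h ⊢
  have hi := left_ne_zero_of_mul h
  have hj := right_ne_zero_of_mul h
  field_simp

lemma choose_mul_poch_div_factorial (z : ℂ) (i j : ℕ) :
    (i + j).choose i * poch z (i + j) / (i + j)! = poch z i / i ! * (poch (z + i) j / j !) := by
  rw [Nat.cast_add_choose, poch_add]
  have : ((i + j)! : ℂ) ≠ 0 := mod_cast (i + j).factorial_ne_zero
  field_simp

lemma sum_antidiagonal_sum_antidiagonal_fst {M : Type*} [AddCommMonoid M] (f : ℕ → ℕ → ℕ → M)
    (n : ℕ) :
    ∑ p ∈ antidiagonal n, ∑ q ∈ antidiagonal p.1, f q.1 q.2 p.2 =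
      ∑ p ∈ antidiagonal n, ∑ q ∈ antidiagonal p.2, f p.1 q.1 q.2 := by
  rw [sum_sigma', sum_sigma']
  refine sum_bij' (fun x _ => ⟨(x.2.1, x.2.2 + x.1.2), (x.2.2, x.1.2)⟩)
    (fun x _ => ⟨(x.1.1 + x.2.1, x.2.2), (x.1.1, x.2.1)⟩) ?_ ?_ ?_ ?_ (fun _ _ => rfl) <;>
  rintro ⟨⟨k, l⟩, j, r⟩ <;>
  simp only [mem_sigma, HasAntidiagonal.mem_antidiagonal, Sigma.mk.injEq, Prod.mk.injEq,
    heq_eq_eq, and_true, true_and] <;>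
  omega

lemma mul_sum_poch_neg_natCast_eq (A A' P Q : ℂ) (hP : ∀ j, poch P j ≠ 0)
    (hQ : ∀ j, poch Q j ≠ 0) (n : ℕ) :
    poch P n * poch Q n *
        ∑ j ∈ range (n + 1), poch (-(n : ℂ)) j * poch A j * poch A' j /
          (poch P j * poch Q j * j !) =
      poch P n * n ! * ∑ p ∈ antidiagonal n, (-1) ^ p.1 * poch A p.1 * poch A' p.1 /
        (poch P p.1 * p.1 !) * (poch (Q + p.1) p.2 / p.2 !) := by
  rw [Nat.sum_antidiagonal_eq_sum_range_succ_mk, mul_sum, mul_sum]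
  refine sum_congr rfl fun j hj => ?_
  obtain ⟨t, rfl⟩ := Nat.exists_eq_add_of_le (Nat.lt_succ_iff.mp (mem_range.mp hj))
  have hdesc : (t ! : ℂ) * (j + t).descFactorial j = (j + t)! := by
    have := Nat.factorial_mul_descFactorial (Nat.le_add_right j t)
    rw [Nat.add_sub_cancel_left] at this
    exact_mod_cast this
  rw [Nat.add_sub_cancel_left, poch_neg_natCast, poch_add Q j t, ← hdesc]
  have hPj := hP j
  have hQj := hQ j
  have ht : (t ! : ℂ) ≠ 0 := mod_cast t.factorial_ne_zero
  have hj : (j ! : ℂ) ≠ 0 := mod_cast j.factorial_ne_zero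
  field_simp

lemma sum_antidiagonal_poch_mul_poch_div_eq (A A' B' C' : ℂ) (hP : ∀ j, poch (A' + B') j ≠ 0)
    (n : ℕ) :
    ∑ p ∈ antidiagonal n, poch A p.1 * poch B' p.1 / (poch (A' + B') p.1 * p.1 !) *
        (poch C' p.2 / p.2 !) =
      ∑ p ∈ antidiagonal n, (-1) ^ p.1 * poch A p.1 * poch A' p.1 /
        (poch (A' + B') p.1 * p.1 !) * (poch (A + C' + p.1) p.2 / p.2 !) := by
  set P := A' + B'
  calc _ = ∑ p ∈ antidiagonal n, ∑ q ∈ antidiagonal p.1,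
        (-1) ^ q.1 * poch A' q.1 / poch P q.1 *
          ((q.1 + q.2).choose q.1 * poch A (q.1 + q.2) / (q.1 + q.2)! *
            (poch C' p.2 / p.2 !)) := by
        refine sum_congr rfl fun p _ => ?_
        have hq : ∀ q ∈ antidiagonal p.1, (-1) ^ q.1 * poch A' q.1 / poch P q.1 *
            ((q.1 + q.2).choose q.1 * poch A (q.1 + q.2) / (q.1 + q.2)! *
              (poch C' p.2 / p.2 !)) =
            p.1.choose q.1 * ((-1) ^ q.1 * poch A' q.1 / poch P q.1) *
              (poch A p.1 / p.1 ! * (poch C' p.2 / p.2 !)) := by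
          intro q hq
          rw [HasAntidiagonal.mem_antidiagonal.mp hq]
          ring
        rw [sum_congr rfl hq, ← sum_mul, ← poch_sub_div_poch A' P hP, show P - A' = B' by ring]
        ring
    _ = _ := sum_antidiagonal_sum_antidiagonal_fst (fun j r l =>
          (-1) ^ j * poch A' j / poch P j *
            ((j + r).choose j * poch A (j + r) / (j + r)! * (poch C' l / l !))) n
    _ = _ := by
        refine sum_congr rfl fun p _ => ?_
        rw [add_right_comm, poch_add_div_factorial, mul_sum]
        refine sum_congr rfl fun q _ => ?_
        rw [choose_mul_poch_div_factorial]
        ring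

lemma cdHahn_eq_sum (n : ℕ) (x : ℝ) (a b c : ℂ) (hab : ∀ j, poch (a + b) j ≠ 0)
    (hac : ∀ j, poch (a + c) j ≠ 0) :
    cdHahn n x a b c = poch (a + b) n * n ! * ∑ p ∈ antidiagonal n,
      poch (a + I * x) p.1 * poch (b + I * x) p.1 / (poch (a + b) p.1 * p.1 !) *
        (poch (c - I * x) p.2 / p.2 !) := by
  have hP : a - I * x + (b + I * x) = a + b := by ring
  have hconv := sum_antidiagonal_poch_mul_poch_div_eq (a + I * x) (a - I * x) (b + I * x)
    (c - I * x) (by rwa [hP]) n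
  rw [hP, show a + I * x + (c - I * x) = a + c by ring] at hconv
  rw [cdHahn, mul_sum_poch_neg_natCast_eq _ _ _ _ hab hac, hconv]

lemma prod_range_add_le (N m : ℕ) : ∏ i ∈ range m, ((N : ℝ) + 1 + i) ≤ m ! * (1 + m) ^ N := by
  have hprod : ∏ i ∈ range m, (N + 1 + i) = m ! * (m + N).choose N := by
    rw [← Nat.ascFactorial_eq_prod_range, Nat.ascFactorial_eq_factorial_mul_choose, add_comm N m,
      Nat.choose_symm_add]
  have hchoose : ((m + N).choose N : ℝ) ≤ (1 + m) ^ N := by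
    rw [add_comm (1 : ℝ)]
    exact_mod_cast Nat.choose_add_le_add_one_pow m N
  calc ∏ i ∈ range m, ((N : ℝ) + 1 + i) = m ! * ((m + N).choose N : ℝ) := by
        exact_mod_cast hprod
    _ ≤ m ! * (1 + m) ^ N := by gcongr

lemma exists_norm_poch_le (w : ℂ) : ∃ N : ℕ, ∀ m, ‖poch w m‖ ≤ m ! * (1 + m) ^ N := by
  obtain ⟨N, hN⟩ := exists_nat_ge ‖w‖
  refine ⟨N, fun m => ?_⟩
  calc ‖poch w m‖ = ∏ i ∈ range m, ‖w + i‖ := norm_prod _ _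
    _ ≤ ∏ i ∈ range m, ((N : ℝ) + 1 + i) := by
        refine prod_le_prod (fun _ _ => norm_nonneg _) fun i _ => (norm_add_le _ _).trans ?_
        rw [norm_natCast]
        linarith
    _ ≤ m ! * (1 + m) ^ N := prod_range_add_le N m

lemma exists_norm_poch_div_factorial_le (w : ℂ) :
    ∃ N : ℕ, ∀ m, ‖poch w m / (m ! : ℂ)‖ ≤ (1 + m) ^ N := by
  obtain ⟨N, hN⟩ := exists_norm_poch_le w
  refine ⟨N, fun m => ?_⟩
  rw [norm_div, norm_natCast, div_le_iff₀ (by positivity), mul_comm]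
  exact hN m

lemma exists_norm_add_mul_norm_add_le (u v w : ℂ) (hw : 0 < w.re) :
    ∃ N : ℕ, ∀ i : ℕ, ‖u + i‖ * ‖v + i‖ ≤ ‖w + i‖ * (N + 1 + i) := by
  obtain ⟨N, hN⟩ := exists_nat_ge (‖u‖ * ‖v‖ / w.re + ‖u‖ + ‖v‖)
  refine ⟨N, fun i => ?_⟩
  have hu : ‖u + i‖ ≤ ‖u‖ + i := by simpa using norm_add_le u i
  have hv : ‖v + i‖ ≤ ‖v‖ + i := by simpa using norm_add_le v i
  have hwi : w.re + i ≤ ‖w + i‖ := by simpa using re_le_norm (w + i)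
  have huv : ‖u‖ * ‖v‖ ≤ w.re * N := by
    rw [← div_le_iff₀' hw]
    linarith [norm_nonneg u, norm_nonneg v]
  have hsum : ‖u‖ + ‖v‖ ≤ N := by
    linarith [div_nonneg (mul_nonneg (norm_nonneg u) (norm_nonneg v)) hw.le]
  calc ‖u + i‖ * ‖v + i‖ ≤ (‖u‖ + i) * (‖v‖ + i) := by gcongr
    _ ≤ (w.re + i) * (N + 1 + i) := by
        have hslack : (0 : ℝ) ≤ w.re + N + 1 - ‖u‖ - ‖v‖ := by linarith
        nlinarith [mul_nonneg (i.cast_nonneg (α := ℝ)) hslack]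
    _ ≤ ‖w + i‖ * (N + 1 + i) := by gcongr

lemma exists_norm_poch_mul_poch_div_le (u v w : ℂ) (hw : 0 < w.re) :
    ∃ N : ℕ, ∀ k, ‖poch u k * poch v k / (poch w k * k !)‖ ≤ (1 + k) ^ N := by
  obtain ⟨N, hN⟩ := exists_norm_add_mul_norm_add_le u v w hw
  refine ⟨N, fun k => ?_⟩
  have hwk : 0 < ‖poch w k‖ := norm_pos_iff.2 (poch_ne_zero hw k)
  rw [norm_div, norm_mul, norm_mul, norm_natCast, div_le_iff₀ (by positivity)]
  calc ‖poch u k‖ * ‖poch v k‖ = ∏ i ∈ range k, (‖u + i‖ * ‖v + i‖) := by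
        rw [poch, poch, norm_prod, norm_prod, prod_mul_distrib]
    _ ≤ ∏ i ∈ range k, (‖w + i‖ * (N + 1 + i)) :=
        prod_le_prod (fun _ _ => by positivity) fun i _ => hN i
    _ = ‖poch w k‖ * ∏ i ∈ range k, ((N : ℝ) + 1 + i) := by
        rw [prod_mul_distrib, poch, norm_prod]
    _ ≤ ‖poch w k‖ * (k ! * (1 + k) ^ N) := by gcongr; exact prod_range_add_le N k
    _ = (1 + k) ^ N * (‖poch w k‖ * k !) := by ring

lemma norm_sum_antidiagonal_mul_le {R : Type*} [SeminormedRing R] {f g : ℕ → R} {p q : ℕ}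
    (hf : ∀ k, ‖f k‖ ≤ (1 + k : ℝ) ^ p) (hg : ∀ k, ‖g k‖ ≤ (1 + k : ℝ) ^ q) (n : ℕ) :
    ‖∑ x ∈ antidiagonal n, f x.1 * g x.2‖ ≤ (1 + n : ℝ) ^ (p + q + 1) := by
  calc ‖∑ x ∈ antidiagonal n, f x.1 * g x.2‖ ≤ ∑ x ∈ antidiagonal n, ‖f x.1 * g x.2‖ :=
        norm_sum_le _ _
    _ ≤ ∑ _x ∈ antidiagonal n, (1 + n : ℝ) ^ p * (1 + n : ℝ) ^ q := by
        refine sum_le_sum fun x hx => (norm_mul_le _ _).trans ?_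
        have h1 : (x.1 : ℝ) ≤ n := mod_cast HasAntidiagonal.antidiagonal.fst_le hx
        have h2 : (x.2 : ℝ) ≤ n := mod_cast HasAntidiagonal.antidiagonal.snd_le hx
        gcongr
        · exact (hf _).trans (by gcongr)
        · exact (hg _).trans (by gcongr)
    _ = (1 + n : ℝ) ^ (p + q + 1) := by
        rw [sum_const, Nat.card_antidiagonal, nsmul_eq_mul]
        push_cast
        ring

theorem cdHahn_bound_general (x : ℝ) (a b c : ℂ)
    (ha : 0 < a.re) (hb : 0 < b.re) (hc : 0 < c.re) :
    ∃ K > (0 : ℝ), ∃ σ > (0 : ℝ), ∀ n : ℕ,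
      ‖cdHahn n x a b c‖ ≤ K * (n.factorial : ℝ) ^ 2 * (1 + (n : ℝ)) ^ σ := by
  have hab : 0 < (a + b).re := by rw [add_re]; linarith
  have hac : 0 < (a + c).re := by rw [add_re]; linarith
  obtain ⟨N₁, h₁⟩ := exists_norm_poch_le (a + b)
  obtain ⟨N₂, h₂⟩ := exists_norm_poch_mul_poch_div_le (a + I * x) (b + I * x) (a + b) hab
  obtain ⟨N₃, h₃⟩ := exists_norm_poch_div_factorial_le (c - I * x)
  refine ⟨1, one_pos, (N₁ + (N₂ + N₃ + 1) : ℕ), by positivity, fun n => ?_⟩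
  rw [cdHahn_eq_sum n x a b c (poch_ne_zero hab) (poch_ne_zero hac), Real.rpow_natCast,
    norm_mul, norm_mul, norm_natCast, pow_add]
  calc _ ≤ n ! * (1 + n : ℝ) ^ N₁ * n ! * (1 + n : ℝ) ^ (N₂ + N₃ + 1) := by
        gcongr
        exacts [h₁ n, norm_sum_antidiagonal_mul_le h₂ h₃ n]
    _ = _ := by ring

theorem cdHahn_bound (x : ℝ) (hx : 0 < x) (a b c : ℂ)
    (ha : 0 < a.re) (hb : 0 < b.re) (hc : 0 < c.re)
    (hconj : ({a, b, c} : Multiset ℂ).map (starRingEnd ℂ) = ({a, b, c} : Multiset ℂ)) :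
    ∃ K > (0 : ℝ), ∃ σ > (0 : ℝ), ∀ n : ℕ,
      ‖cdHahn n x a b c‖ ≤ K * (n.factorial : ℝ) ^ 2 * (1 + (n : ℝ)) ^ σ :=
  cdHahn_bound_general x a b c ha hb hc
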